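/- arXiv:2006.08587 — 4 statements merged into one kernel-verified Lean document; each statement's English description precedes it below -/
import Mathlib

section
/- For the Born–Infeld energy function 𝓔(r) = b² ∫_r^∞ (√(1 + q²/(b²s⁴)) - 1)·s² ds with b, q > 0, one has 𝓔(r) ~ q²/(2r) as r → ∞, in the sense that r·𝓔(r) → q²/2 as r → ∞. -/
open Real Filter MeasureTheory


lemma sqrt_ub' {x : ℝ} (hx : 0 ≤ x) : Real.sqrt (1+x) ≤ 1 + x/2 := by
  rw [show (1:ℝ)+x/2 = Real.sqrt ((1+x/2)^2) from (Real.sqrt_sq (by positivity)).symm]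
  exact Real.sqrt_le_sqrt (by nlinarith)

lemma sqrt_lb' {x : ℝ} (hx : 0 ≤ x) : 1 + x/2 - x^2/8 ≤ Real.sqrt (1+x) := by
  have h1 := Real.sq_sqrt (show (0:ℝ) ≤ 1+x by linarith)
  have h2 := Real.sqrt_nonneg (1+x)
  set y := Real.sqrt (1+x)
  rcases le_or_gt (1 + x/2 - x^2/8) 0 with h | h
  · linarith
  · by_contra hc
    push_neg at hc
    have hsq : y*y < (1 + x/2 - x^2/8)*(1 + x/2 - x^2/8) := mul_self_lt_mul_self h2 hc
    nlinarith [mul_nonneg (mul_nonneg hx hx) hx, mul_pos h h, sq_nonneg x,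
      mul_lt_mul_of_pos_left h (show (0:ℝ) < x^2 + 1 by positivity)]

lemma rpow_eq_inv_pow {x : ℝ} (hx : 0 < x) (n : ℕ) : x ^ (-(n:ℝ)) = 1/x^n := by
  rw [Real.rpow_neg hx.le, Real.rpow_natCast, one_div]

lemma intOn_inv_pow {r : ℝ} (hr : 0 < r) {n : ℕ} (hn : 2 ≤ n) :
    IntegrableOn (fun s : ℝ => 1/s^n) (Set.Ioi r) := by
  refine (integrableOn_Ioi_rpow_of_lt (show -(n:ℝ) < -1 by
    simp only [neg_lt_neg_iff]; exact_mod_cast lt_of_lt_of_le one_lt_two hn) hr).congr_fun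
    (fun x hx => ?_) measurableSet_Ioi
  exact rpow_eq_inv_pow (hr.trans hx) n

lemma int_inv_pow {r : ℝ} (hr : 0 < r) {n : ℕ} (hn : 2 ≤ n) :
    ∫ s in Set.Ioi r, 1/s^n = 1/((n-1) * r^(n-1 : ℕ)) := by
  have hn1 : (1:ℝ) < (n:ℝ) := by exact_mod_cast lt_of_lt_of_le one_lt_two hn
  rw [MeasureTheory.setIntegral_congr_fun measurableSet_Ioi
    (fun x (hx : x ∈ Set.Ioi r) => (rpow_eq_inv_pow (hr.trans hx) n).symm),
    integral_Ioi_rpow_of_lt (by linarith) hr]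
  have : r ^ (-(n:ℝ) + 1) = 1/r^(n-1 : ℕ) := by
    rw [show -(n:ℝ)+1 = -(((n-1:ℕ)):ℝ) by push_cast [Nat.cast_sub (by omega : 1 ≤ n)]; ring]
    exact rpow_eq_inv_pow hr (n-1)
  rw [this]
  have hrp : (0:ℝ) < r^(n-1:ℕ) := by positivity
  rw [div_eq_div_iff (ne_of_lt (by linarith : -(n:ℝ)+1 < 0)) (ne_of_gt (mul_pos (by linarith) hrp))]
  have h1 : (1/r^(n-1:ℕ)) * r^(n-1:ℕ) = 1 := one_div_mul_cancel (ne_of_gt hrp)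
  linear_combination (1-(n:ℝ))*h1

set_option maxHeartbeats 1000000 in
/-- For the Born–Infeld energy function
`𝓔(r) = b² ∫_r^∞ (√(1 + q²/(b²s⁴)) - 1)·s² ds` with `b, q > 0`, one has
`𝓔(r) ~ q²/(2r)` as `r → ∞`, i.e. `r·𝓔(r) → q²/2`. -/
theorem bornInfeld_energy_coulomb_tail (b q : ℝ) (hb : 0 < b) (hq : 0 < q)
    (E : ℝ → ℝ)
    (hE : ∀ r, 0 < r →
      E r = b^2 * ∫ s in Set.Ioi r, (Real.sqrt (1 + q^2/(b^2*s^4)) - 1) * s^2) :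
    Tendsto (fun r => r * E r) atTop (nhds (q^2/2)) := by
  set f : ℝ → ℝ := fun s => (Real.sqrt (1 + q^2/(b^2*s^4)) - 1) * s^2 with hf
  have hb2 : (0:ℝ) < b^2 := by positivity
  -- pointwise bounds
  have hub : ∀ s : ℝ, 0 < s → f s ≤ q^2/(2*b^2) * (1/s^2) := by
    intro s hs
    have hx : 0 ≤ q^2/(b^2*s^4) := by positivity
    have h1 := sqrt_ub' hx
    have h2 : (q^2/(b^2*s^4))/2 * s^2 = q^2/(2*b^2) * (1/s^2) := by
      field_simp
    calc f s ≤ (q^2/(b^2*s^4))/2 * s^2 := by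
          apply mul_le_mul_of_nonneg_right _ (sq_nonneg s); linarith
      _ = _ := h2
  have hlb : ∀ s : ℝ, 0 < s →
      q^2/(2*b^2) * (1/s^2) - q^4/(8*b^4) * (1/s^6) ≤ f s := by
    intro s hs
    have hx : 0 ≤ q^2/(b^2*s^4) := by positivity
    have h1 := sqrt_lb' hx
    have h2 : ((q^2/(b^2*s^4))/2 - (q^2/(b^2*s^4))^2/8) * s^2
        = q^2/(2*b^2) * (1/s^2) - q^4/(8*b^4) * (1/s^6) := by
      field_simp
    calc q^2/(2*b^2) * (1/s^2) - q^4/(8*b^4) * (1/s^6)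
        = ((q^2/(b^2*s^4))/2 - (q^2/(b^2*s^4))^2/8) * s^2 := h2.symm
      _ ≤ f s := by
          apply mul_le_mul_of_nonneg_right _ (sq_nonneg s); linarith
  have hfnn : ∀ s : ℝ, 0 < s → 0 ≤ f s := by
    intro s hs
    have hx : 0 ≤ q^2/(b^2*s^4) := by positivity
    have : (1:ℝ) ≤ Real.sqrt (1 + q^2/(b^2*s^4)) := by
      have h := Real.sqrt_le_sqrt (show (1:ℝ) ≤ 1 + q^2/(b^2*s^4) by linarith)
      rwa [Real.sqrt_one] at h
    have := sub_nonneg.mpr this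
    positivity
  -- integrability
  have hmeas : Measurable f := by
    have h1 : Measurable fun s : ℝ => q^2/(b^2*s^4) :=
      measurable_const.div ((measurable_id.pow_const 4).const_mul (b^2))
    exact ((Real.continuous_sqrt.measurable.comp (h1.const_add 1)).sub measurable_const).mul
      (measurable_id.pow_const 2)
  have hg2 : ∀ {r : ℝ}, 0 < r → IntegrableOn (fun s : ℝ => q^2/(2*b^2) * (1/s^2)) (Set.Ioi r) :=
    fun {r} hr => (intOn_inv_pow hr le_rfl).const_mul _
  have hg6 : ∀ {r : ℝ}, 0 < r → IntegrableOn (fun s : ℝ => q^4/(8*b^4) * (1/s^6)) (Set.Ioi r) :=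
    fun {r} hr => (intOn_inv_pow hr (by norm_num)).const_mul _
  have hfi : ∀ {r : ℝ}, 0 < r → IntegrableOn f (Set.Ioi r) := by
    intro r hr
    refine MeasureTheory.Integrable.mono (hg2 hr) hmeas.aestronglyMeasurable.restrict ?_
    filter_upwards [self_mem_ae_restrict measurableSet_Ioi] with s hs
    have hs0 : 0 < s := hr.trans hs
    rw [Real.norm_of_nonneg (hfnn s hs0), Real.norm_of_nonneg (by positivity)]
    exact hub s hs0
  -- integral values
  have hint2 : ∀ {r : ℝ}, 0 < r →
      ∫ s in Set.Ioi r, q^2/(2*b^2) * (1/s^2) = q^2/(2*b^2) * (1/r) := by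
    intro r hr
    rw [MeasureTheory.integral_const_mul, int_inv_pow hr le_rfl]
    norm_num
  have hint6 : ∀ {r : ℝ}, 0 < r →
      ∫ s in Set.Ioi r, q^4/(8*b^4) * (1/s^6) = q^4/(8*b^4) * (1/(5*r^5)) := by
    intro r hr
    rw [MeasureTheory.integral_const_mul, int_inv_pow hr (by norm_num)]
    norm_num
  -- bounds on r * E r
  have hUB : ∀ r : ℝ, 0 < r → r * E r ≤ q^2/2 := by
    intro r hr
    have hI : ∫ s in Set.Ioi r, f s ≤ q^2/(2*b^2) * (1/r) := by
      rw [← hint2 hr]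
      exact setIntegral_mono_on (hfi hr) (hg2 hr) measurableSet_Ioi
        (fun s hs => hub s (hr.trans hs))
    rw [hE r hr]
    calc r * (b^2 * ∫ s in Set.Ioi r, f s) ≤ r * (b^2 * (q^2/(2*b^2) * (1/r))) := by
          apply mul_le_mul_of_nonneg_left (mul_le_mul_of_nonneg_left hI hb2.le) hr.le
      _ = q^2/2 := by field_simp
  have hLB : ∀ r : ℝ, 0 < r → q^2/2 - q^4/(40*b^2) * (1/r^4) ≤ r * E r := by
    intro r hr
    have hI : q^2/(2*b^2) * (1/r) - q^4/(8*b^4) * (1/(5*r^5)) ≤ ∫ s in Set.Ioi r, f s := by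
      rw [← hint2 hr, ← hint6 hr, ← MeasureTheory.integral_sub (hg2 hr) (hg6 hr)]
      exact setIntegral_mono_on ((hg2 hr).sub (hg6 hr)) (hfi hr) measurableSet_Ioi
        (fun s hs => hlb s (hr.trans hs))
    rw [hE r hr]
    calc q^2/2 - q^4/(40*b^2) * (1/r^4)
        = r * (b^2 * (q^2/(2*b^2) * (1/r) - q^4/(8*b^4) * (1/(5*r^5)))) := by
          field_simp; ring
      _ ≤ r * (b^2 * ∫ s in Set.Ioi r, f s) := by
          apply mul_le_mul_of_nonneg_left (mul_le_mul_of_nonneg_left hI hb2.le) hr.le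
  -- squeeze
  have hlim : Tendsto (fun r : ℝ => q^2/2 - q^4/(40*b^2) * (1/r^4)) atTop (nhds (q^2/2)) := by
    have h0 : Tendsto (fun r : ℝ => (r^4)⁻¹) atTop (nhds 0) :=
      (tendsto_pow_atTop (by norm_num : 4 ≠ 0)).inv_tendsto_atTop
    have h1 : Tendsto (fun r : ℝ => q^4/(40*b^2) * (1/r^4)) atTop (nhds 0) := by
      simpa [one_div] using h0.const_mul (q^4/(40*b^2))
    have h2 : Tendsto (fun r : ℝ => q^2/2 - q^4/(40*b^2) * (1/r^4)) atTop (nhds (q^2/2 - 0)) :=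
      tendsto_const_nhds.sub h1
    simpa using h2
  refine tendsto_of_tendsto_of_tendsto_of_le_of_le' hlim tendsto_const_nhds ?_ ?_
  · filter_upwards [eventually_gt_atTop 0] with r hr using hLB r hr
  · filter_upwards [eventually_gt_atTop 0] with r hr using hUB r hr
end

section
/- Suppose ζ : ℝ₊ → ℝ₊ is C² with ζ' > 0, ζ(μ) - μζ'(μ) ≥ 0, ζ'(μ)+2μζ''(μ) ≥ 0 for μ > 0, lim_{μ→0} ζ(μ)/μ = 1, and ζ(μ) ~ c_b·μ^b as μ → ∞ for some c_b > 0 and b ∈ ℝ (meaning ζ(μ)/μ^b → c_b). Then 1/2 ≤ b ≤ 1. -/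
/-!
(R2) says exactly that `ζ μ / μ` is nonincreasing, so by (R1) `ζ μ ≤ μ`, which forces `b ≤ 1`.
(R3) says that `2 μ ζ' μ - ζ μ` is nondecreasing; since `ζ μ → 0` as `μ → 0⁺` and `ζ' > 0`, it is
nonnegative. That is the sign of the derivative of `ζ μ ^ 2 / μ`, so `ζ μ ≥ ζ 1 * √μ` for `μ ≥ 1`,
which forces `b ≥ 1/2`.
-/

open Filter Set Topology

lemma monotoneOn_Ioi_of_hasDerivAt_nonneg {g g' : ℝ → ℝ}
    (hg : ∀ x, 0 < x → HasDerivAt g (g' x) x) (hg' : ∀ x, 0 < x → 0 ≤ g' x) :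
    MonotoneOn g (Ioi 0) :=
  monotoneOn_of_hasDerivWithinAt_nonneg (convex_Ioi 0)
    (fun x hx => (hg x hx).continuousAt.continuousWithinAt)
    (by simpa using fun x hx => (hg x hx).hasDerivWithinAt) (by simpa using hg')

lemma antitoneOn_Ioi_of_hasDerivAt_nonpos {g g' : ℝ → ℝ}
    (hg : ∀ x, 0 < x → HasDerivAt g (g' x) x) (hg' : ∀ x, 0 < x → g' x ≤ 0) :
    AntitoneOn g (Ioi 0) :=
  antitoneOn_of_hasDerivWithinAt_nonpos (convex_Ioi 0)
    (fun x hx => (hg x hx).continuousAt.continuousWithinAt)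
    (by simpa using fun x hx => (hg x hx).hasDerivWithinAt) (by simpa using hg')

lemma AntitoneOn.le_of_tendsto_nhdsGT {g : ℝ → ℝ} {L x : ℝ} (hg : AntitoneOn g (Ioi 0))
    (hL : Tendsto g (𝓝[>] 0) (𝓝 L)) (hx : 0 < x) : g x ≤ L :=
  ge_of_tendsto hL <| by
    filter_upwards [Ioo_mem_nhdsGT hx] with ε hε using hg hε.1 hx hε.2.le

lemma MonotoneOn.ge_of_le_of_tendsto_nhdsGT {g u : ℝ → ℝ} {L x : ℝ} (hg : MonotoneOn g (Ioi 0))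
    (hu : Tendsto u (𝓝[>] 0) (𝓝 L)) (hug : ∀ᶠ ε in 𝓝[>] 0, u ε ≤ g ε) (hx : 0 < x) :
    L ≤ g x :=
  le_of_tendsto hu <| by
    filter_upwards [hug, Ioo_mem_nhdsGT hx] with ε hεu hε using hεu.trans (hg hε.1 hx hε.2.le)

lemma le_of_mul_rpow_le_of_tendsto_div_rpow {f : ℝ → ℝ} {a b c d : ℝ} (hc : 0 < c)
    (hlow : ∀ᶠ x in atTop, c * x ^ a ≤ f x) (hf : Tendsto (fun x => f x / x ^ b) atTop (𝓝 d)) :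
    a ≤ b := by
  by_contra! hba
  have hge : ∀ᶠ x in atTop, c * x ^ (a - b) ≤ f x / x ^ b := by
    filter_upwards [hlow, eventually_gt_atTop 0] with x hx hx0
    rw [Real.rpow_sub hx0, ← mul_div_assoc]
    gcongr
  exact not_tendsto_atTop_of_tendsto_nhds hf <|
    tendsto_atTop_mono' atTop hge ((tendsto_rpow_atTop (sub_pos.2 hba)).const_mul_atTop hc)

lemma le_of_le_mul_rpow_of_tendsto_div_rpow {f : ℝ → ℝ} {a b C d : ℝ} (hd : 0 < d)
    (hup : ∀ᶠ x in atTop, f x ≤ C * x ^ a) (hf : Tendsto (fun x => f x / x ^ b) atTop (𝓝 d)) :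
    b ≤ a := by
  by_contra! hab
  have hle : ∀ᶠ x in atTop, f x / x ^ b ≤ C * x ^ (-(b - a)) := by
    filter_upwards [hup, eventually_gt_atTop 0] with x hx hx0
    rw [neg_sub, Real.rpow_sub hx0, ← mul_div_assoc]
    gcongr
  have h0 : Tendsto (fun x : ℝ => C * x ^ (-(b - a))) atTop (𝓝 0) := by
    simpa using (tendsto_rpow_neg_atTop (sub_pos.2 hab)).const_mul C
  linarith [le_of_tendsto_of_tendsto hf h0 hle]

lemma tendsto_nhdsGT_zero_of_tendsto_div_self {f : ℝ → ℝ} {L : ℝ}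
    (hf : Tendsto (fun x => f x / x) (𝓝[>] 0) (𝓝 L)) : Tendsto f (𝓝[>] 0) (𝓝 0) := by
  have := hf.mul (tendsto_nhdsWithin_of_tendsto_nhds tendsto_id)
  rw [mul_zero] at this
  refine this.congr' ?_
  filter_upwards [self_mem_nhdsWithin] with x (hx : 0 < x)
  exact div_mul_cancel₀ _ hx.ne'

section

variable {ζ ζ' : ℝ → ℝ} (hderiv : ∀ μ, 0 < μ → HasDerivAt ζ (ζ' μ) μ)
include hderiv

lemma antitoneOn_div_self_of_mul_deriv_le (hR2 : ∀ μ, 0 < μ → μ * ζ' μ ≤ ζ μ) :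
    AntitoneOn (fun μ => ζ μ / μ) (Ioi 0) :=
  antitoneOn_Ioi_of_hasDerivAt_nonpos
    (fun μ hμ => (hderiv μ hμ).div (hasDerivAt_id μ) hμ.ne')
    (fun μ hμ => div_nonpos_of_nonpos_of_nonneg (by linarith [hR2 μ hμ]) (sq_nonneg μ))

lemma monotoneOn_two_mul_mul_deriv_sub {ζ'' : ℝ → ℝ}
    (hderiv' : ∀ μ, 0 < μ → HasDerivAt ζ' (ζ'' μ) μ)
    (hR3 : ∀ μ, 0 < μ → 0 ≤ ζ' μ + 2 * μ * ζ'' μ) :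
    MonotoneOn (fun μ => 2 * μ * ζ' μ - ζ μ) (Ioi 0) := by
  refine monotoneOn_Ioi_of_hasDerivAt_nonneg (fun μ hμ => ?_) hR3
  exact ((((hasDerivAt_id' μ).const_mul 2).fun_mul (hderiv' μ hμ)).fun_sub (hderiv μ hμ)).congr_deriv
    (by ring)

lemma monotoneOn_sq_div_self (hpos : ∀ μ, 0 < μ → 0 ≤ ζ μ)
    (hle : ∀ μ, 0 < μ → ζ μ ≤ 2 * μ * ζ' μ) :
    MonotoneOn (fun μ => ζ μ ^ 2 / μ) (Ioi 0) := by
  refine monotoneOn_Ioi_of_hasDerivAt_nonneg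
    (fun μ hμ => ((hderiv μ hμ).fun_pow 2).div (hasDerivAt_id' μ) hμ.ne') fun μ hμ => ?_
  have : 0 ≤ ζ μ * (2 * μ * ζ' μ - ζ μ) := mul_nonneg (hpos μ hμ) (by linarith [hle μ hμ])
  apply div_nonneg _ (sq_nonneg μ)
  push_cast
  linarith

end

lemma mul_sqrt_le_of_monotoneOn_sq_div_self {ζ : ℝ → ℝ}
    (hmono : MonotoneOn (fun μ => ζ μ ^ 2 / μ) (Ioi 0)) (hpos : ∀ μ, 0 < μ → 0 ≤ ζ μ)
    {μ : ℝ} (hμ : 1 ≤ μ) : ζ 1 * √μ ≤ ζ μ := by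
  have hμ0 : 0 < μ := one_pos.trans_le hμ
  have hsq : ζ 1 ^ 2 * μ ≤ ζ μ ^ 2 := by
    simpa [le_div_iff₀ hμ0] using hmono (mem_Ioi.2 one_pos) (mem_Ioi.2 hμ0) hμ
  calc ζ 1 * √μ = √(ζ 1 ^ 2 * μ) := by
        rw [Real.sqrt_mul (sq_nonneg _), Real.sqrt_sq (hpos 1 one_pos)]
    _ ≤ √(ζ μ ^ 2) := Real.sqrt_le_sqrt hsq
    _ = ζ μ := Real.sqrt_sq (hpos μ hμ0)

/-- If `ζ : ℝ₊ → ℝ₊` is `C²`, satisfies (R1)–(R3), and `ζ(μ) ~ c_b·μ^b` as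
`μ → ∞` with `c_b > 0`, then `1/2 ≤ b ≤ 1`. -/
theorem zeta_power_law_exponent (ζ ζ' ζ'' : ℝ → ℝ) (b c_b : ℝ)
    (hderiv : ∀ μ, 0 < μ → HasDerivAt ζ (ζ' μ) μ)
    (hderiv' : ∀ μ, 0 < μ → HasDerivAt ζ' (ζ'' μ) μ)
    (hpos : ∀ μ, 0 < μ → 0 < ζ μ)
    (hζ' : ∀ μ, 0 < μ → 0 < ζ' μ)
    (hR2 : ∀ μ, 0 < μ → 0 ≤ ζ μ - μ * ζ' μ)
    (hR3 : ∀ μ, 0 < μ → 0 ≤ ζ' μ + 2 * μ * ζ'' μ)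
    (hR1 : Tendsto (fun μ => ζ μ / μ) (nhdsWithin 0 (Set.Ioi 0)) (nhds 1))
    (hcb : 0 < c_b)
    (hinfty : Tendsto (fun μ => ζ μ / μ ^ b) atTop (nhds c_b)) :
    1/2 ≤ b ∧ b ≤ 1 := by
  have hle_self : ∀ μ, 0 < μ → ζ μ ≤ μ := fun μ hμ =>
    (div_le_one hμ).1 <| (antitoneOn_div_self_of_mul_deriv_le hderiv
      (fun μ hμ => sub_nonneg.1 (hR2 μ hμ))).le_of_tendsto_nhdsGT hR1 hμ
  have hle_deriv : ∀ μ, 0 < μ → ζ μ ≤ 2 * μ * ζ' μ := fun μ hμ => sub_nonneg.1 <|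
    (monotoneOn_two_mul_mul_deriv_sub hderiv hderiv' hR3).ge_of_le_of_tendsto_nhdsGT
      (by simpa using (tendsto_nhdsGT_zero_of_tendsto_div_self hR1).neg) (by
        filter_upwards [self_mem_nhdsWithin] with ε (hε : 0 < ε)
        nlinarith [hζ' ε hε]) hμ
  have hpos' : ∀ μ, 0 < μ → 0 ≤ ζ μ := fun μ hμ => (hpos μ hμ).le
  have hsqrt : ∀ μ, 1 ≤ μ → ζ 1 * √μ ≤ ζ μ := fun _ =>
    mul_sqrt_le_of_monotoneOn_sq_div_self (monotoneOn_sq_div_self hderiv hpos' hle_deriv) hpos'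
  constructor
  · refine le_of_mul_rpow_le_of_tendsto_div_rpow (hpos 1 one_pos) ?_ hinfty
    filter_upwards [eventually_ge_atTop 1] with μ hμ
    simpa [Real.sqrt_eq_rpow] using hsqrt μ hμ
  · refine le_of_le_mul_rpow_of_tendsto_div_rpow (C := 1) hcb ?_ hinfty
    filter_upwards [eventually_gt_atTop 0] with μ hμ
    simpa using hle_self μ hμ
end

section
/- With m₁ as in the kink model (m₁(r) = M²c²r/(2Q²) for r < r₁ = Q²/(Mc²), m₁(r) = M - Q²/(2c²r) for r ≥ r₁), if GM²/Q² < 1 then m₁(r)/r < c²/(2G) for all r > 0; i.e. the kink-model spacetime has no horizon. -/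
/-- For the kink-model mass function (`m₁(r) = M²c²r/(2Q²)` for `r < r₁`,
`m₁(r) = M - Q²/(2c²r)` for `r ≥ r₁ = Q²/(Mc²)`), if `GM²/Q² < 1` then
`m₁(r)/r < c²/(2G)` for all `r > 0`: no horizon. -/
theorem kink_model_no_horizon (G c M Q : ℝ) (hG : 0 < G) (hc : 0 < c)
    (hM : 0 < M) (hQ : 0 < Q) (hnoBH : G*M^2/Q^2 < 1)
    (r₁ : ℝ) (m₁ : ℝ → ℝ)
    (hr₁ : r₁ = Q^2/(M*c^2))
    (hm₁lt : ∀ r, 0 < r → r < r₁ → m₁ r = M^2*c^2*r/(2*Q^2))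
    (hm₁ge : ∀ r, r₁ ≤ r → m₁ r = M - Q^2/(2*c^2*r)) :
    ∀ r, 0 < r → m₁ r / r < c^2/(2*G) := by
  intro r hr
  have hQ2 : (0:ℝ) < Q^2 := by positivity
  have hkey : G*M^2 < Q^2 := by
    have := (div_lt_one hQ2).mp hnoBH
    linarith
  rcases lt_or_ge r r₁ with h | h
  · rw [hm₁lt r hr h]
    have heq : M^2*c^2*r/(2*Q^2)/r = M^2*c^2/(2*Q^2) := by
      field_simp
    rw [heq, div_lt_div_iff₀ (by positivity) (by positivity)]
    nlinarith [mul_lt_mul_of_pos_left hkey (show (0:ℝ) < c^2 by positivity)]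
  · rw [hm₁ge r h]
    rw [div_lt_div_iff₀ hr (by positivity)]
    have hsq : 0 ≤ (M*c^2*r - Q^2)^2 := sq_nonneg _
    have hc2r : 0 < c^2*r := by positivity
    have hexp : M - Q^2/(2*c^2*r) = (2*M*c^2*r - Q^2)/(2*c^2*r) := by
      field_simp
    rw [hexp, div_mul_eq_mul_div, div_lt_iff₀ (by positivity)]
    nlinarith [mul_nonneg hG.le hsq, mul_lt_mul_of_pos_right hkey (show (0:ℝ) < c^4*r^2 by positivity), hQ2]
end

section
/- Suppose ζ : ℝ₊ → ℝ₊ satisfies ζ(μ) > min{μ, √(μ₁μ)} for all μ > 0 with μ₁ = M⁴c⁸/(2Q⁶), and GM² < Q². Then the mass function m(r) = M - (1/c²)∫_r^∞ ζ(Q²/(2s⁴)) s² ds satisfies m(r) ≤ m₁(r) for all r > 0 (whenever the integral converges, allowing m(r) = -∞), and consequently m(r)/r < c²/(2G) for all r > 0. -/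
/-!
For `s > 0` the comparison integrand is explicit:
`ζ₁(Q²/(2s⁴)) s² = min (Q²/(2s²)) (M²c⁴/(2Q²)) = (Q²/2) / max(s, r₁)²` with `r₁ = Q²/(Mc²)`.
Its integral over `(r, ∞)` is at least `Mc² - M²c⁴ r/(2Q²)`, with equality for `r ≤ r₁` and by
AM–GM otherwise, so `m₁(r) ≤ M²c² r/(2Q²)`, and `M²c²/(2Q²) < c²/(2G)` is exactly `GM² < Q²`.
Domination `ζ₁ ≤ ζ` gives `m ≤ m₁` by monotonicity of the integral.
-/

open Real MeasureTheory Set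

lemma eqOn_div_sq_rpow (a : ℝ) {r : ℝ} (hr : 0 < r) :
    EqOn (fun s : ℝ => a * s ^ (-2 : ℝ)) (fun s => a / s ^ 2) (Ioi r) := fun s hs => by
  dsimp only
  rw [rpow_neg (hr.trans hs).le, show (2 : ℝ) = (2 : ℕ) by norm_num, rpow_natCast, div_eq_mul_inv]

lemma integrableOn_Ioi_div_sq (a : ℝ) {r : ℝ} (hr : 0 < r) :
    IntegrableOn (fun s : ℝ => a / s ^ 2) (Ioi r) :=
  IntegrableOn.congr_fun
    ((integrableOn_Ioi_rpow_of_lt (by norm_num : (-2 : ℝ) < -1) hr).const_mul a)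
    (eqOn_div_sq_rpow a hr) measurableSet_Ioi

lemma integral_Ioi_div_sq (a : ℝ) {r : ℝ} (hr : 0 < r) :
    ∫ s in Ioi r, a / s ^ 2 = a / r := by
  rw [← setIntegral_congr_fun measurableSet_Ioi (eqOn_div_sq_rpow a hr), integral_const_mul,
    integral_Ioi_rpow_of_lt (by norm_num) hr]
  norm_num [rpow_neg_one, div_eq_mul_inv]

lemma min_div_sq_eq_div_max_sq {a s ρ : ℝ} (ha : 0 ≤ a) (hs : 0 < s) (hρ : 0 < ρ) :
    min (a / s ^ 2) (a / ρ ^ 2) = a / max s ρ ^ 2 := by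
  rcases le_total s ρ with h | h
  · rw [max_eq_right h, min_eq_right (by gcongr)]
  · rw [max_eq_left h, min_eq_left (by gcongr)]

lemma le_integral_Ioi_div_max_sq {a r ρ : ℝ} (ha : 0 ≤ a) (hr : 0 < r) (hρ : 0 < ρ) :
    2 * a / ρ - a * r / ρ ^ 2 ≤ ∫ s in Ioi r, a / max s ρ ^ 2 := by
  rcases le_or_gt r ρ with hrρ | hρr
  · have h_const : EqOn (fun s => a / max s ρ ^ 2) (fun _ => a / ρ ^ 2) (Ioc r ρ) :=
      fun s hs => by simp only [max_eq_right hs.2]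
    have h_tail : EqOn (fun s => a / max s ρ ^ 2) (fun s => a / s ^ 2) (Ioi ρ) :=
      fun s hs => by simp only [max_eq_left (mem_Ioi.1 hs).le]
    rw [← Ioc_union_Ioi_eq_Ioi hrρ, setIntegral_union Ioc_disjoint_Ioi_same measurableSet_Ioi
      (IntegrableOn.congr_fun (integrableOn_const (by simp)) h_const.symm measurableSet_Ioc)
      ((integrableOn_Ioi_div_sq a hρ).congr_fun h_tail.symm measurableSet_Ioi),
      setIntegral_congr_fun measurableSet_Ioc h_const,
      setIntegral_congr_fun measurableSet_Ioi h_tail, setIntegral_const, integral_Ioi_div_sq a hρ, Measure.real, Real.volume_Ioc,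
      ENNReal.toReal_ofReal (sub_nonneg.2 hrρ), smul_eq_mul]
    exact le_of_eq (by field_simp; ring)
  · have h_tail : EqOn (fun s => a / max s ρ ^ 2) (fun s => a / s ^ 2) (Ioi r) :=
      fun s hs => by simp only [max_eq_left (hρr.trans (mem_Ioi.1 hs)).le]
    rw [setIntegral_congr_fun measurableSet_Ioi h_tail, integral_Ioi_div_sq a hr]
    have hsq : 0 ≤ a * (r - ρ) ^ 2 / (r * ρ ^ 2) := by positivity
    have hgap : a / r - (2 * a / ρ - a * r / ρ ^ 2) = a * (r - ρ) ^ 2 / (r * ρ ^ 2) := by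
      field_simp; ring
    linarith

lemma min_sqrt_mul_sq_eq_div_max_sq {c M Q s : ℝ} (hc : 0 < c) (hM : 0 < M) (hQ : 0 < Q)
    (hs : 0 < s) :
    min (Q ^ 2 / (2 * s ^ 4)) (√(M ^ 4 * c ^ 8 / (2 * Q ^ 6) * (Q ^ 2 / (2 * s ^ 4)))) * s ^ 2
      = Q ^ 2 / 2 / max s (Q ^ 2 / (M * c ^ 2)) ^ 2 := by
  have hsqrt : √(M ^ 4 * c ^ 8 / (2 * Q ^ 6) * (Q ^ 2 / (2 * s ^ 4)))
      = M ^ 2 * c ^ 4 / (2 * Q ^ 2 * s ^ 2) := by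
    rw [← sqrt_sq (by positivity : 0 ≤ M ^ 2 * c ^ 4 / (2 * Q ^ 2 * s ^ 2))]
    congr 1
    field_simp
  rw [hsqrt, min_mul_of_nonneg _ _ (sq_nonneg s),
    ← min_div_sq_eq_div_max_sq (by positivity) hs (by positivity)]
  congr 1 <;> field_simp

lemma sub_mul_integral_Ioi_div_max_sq_le {c M Q r : ℝ} (hc : 0 < c) (hM : 0 < M) (hQ : 0 < Q)
    (hr : 0 < r) :
    M - 1 / c ^ 2 * ∫ s in Ioi r, Q ^ 2 / 2 / max s (Q ^ 2 / (M * c ^ 2)) ^ 2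
      ≤ M ^ 2 * c ^ 2 / (2 * Q ^ 2) * r := by
  have hlower := le_integral_Ioi_div_max_sq (by positivity : 0 ≤ Q ^ 2 / 2) hr
    (by positivity : 0 < Q ^ 2 / (M * c ^ 2))
  have hvalue : 2 * (Q ^ 2 / 2) / (Q ^ 2 / (M * c ^ 2)) - Q ^ 2 / 2 * r / (Q ^ 2 / (M * c ^ 2)) ^ 2
      = M * c ^ 2 - M ^ 2 * c ^ 4 / (2 * Q ^ 2) * r := by
    field_simp
  calc M - 1 / c ^ 2 * ∫ s in Ioi r, Q ^ 2 / 2 / max s (Q ^ 2 / (M * c ^ 2)) ^ 2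
      ≤ M - 1 / c ^ 2 * (M * c ^ 2 - M ^ 2 * c ^ 4 / (2 * Q ^ 2) * r) := by
        rw [← hvalue]; gcongr
    _ = M ^ 2 * c ^ 2 / (2 * Q ^ 2) * r := by field_simp; ring

theorem dominating_zeta_no_horizon_general (G c M Q μ₁ : ℝ) (hG : 0 < G) (hc : 0 < c)
    (hM : 0 < M) (hQ : 0 < Q) (hnoBH : G*M^2 < Q^2)
    (hμ₁ : μ₁ = M^4*c^8/(2*Q^6))
    (ζ ζ₁ : ℝ → ℝ) (m m₁ : ℝ → ℝ)
    (hζ₁ : ∀ μ, ζ₁ μ = min μ (Real.sqrt (μ₁*μ)))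
    (hdom : ∀ μ, 0 < μ → ζ₁ μ < ζ μ)
    (hm : ∀ r, m r = M - (1/c^2) * ∫ s in Set.Ioi r, ζ (Q^2/(2*s^4)) * s^2)
    (hm₁ : ∀ r, m₁ r = M - (1/c^2) * ∫ s in Set.Ioi r, ζ₁ (Q^2/(2*s^4)) * s^2) :
    ∀ r, 0 < r →
      IntegrableOn (fun s => ζ (Q^2/(2*s^4)) * s^2) (Set.Ioi r) →
      m r ≤ m₁ r ∧ m r / r < c^2/(2*G) := by
  intro r hr hint
  have hζ₁_eq : EqOn (fun s => ζ₁ (Q^2/(2*s^4)) * s^2)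
      (fun s => Q^2/2 / max s (Q^2/(M*c^2)) ^ 2) (Ioi r) := fun s hs => by
    simp only [hζ₁, hμ₁, min_sqrt_mul_sq_eq_div_max_sq hc hM hQ (hr.trans hs)]
  have hintegral_le :
      ∫ s in Ioi r, ζ₁ (Q^2/(2*s^4)) * s^2 ≤ ∫ s in Ioi r, ζ (Q^2/(2*s^4)) * s^2 := by
    refine integral_mono_of_nonneg ?_ hint ?_ <;>
      filter_upwards [ae_restrict_mem measurableSet_Ioi] with s hs
    · exact (hζ₁_eq hs).symm.le.trans' (by dsimp only; positivity)
    · have hs₀ : 0 < s := hr.trans hs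
      exact mul_le_mul_of_nonneg_right (hdom _ (by positivity)).le (sq_nonneg s)
  have hm_le : m r ≤ m₁ r := by
    rw [hm, hm₁]
    exact sub_le_sub_left (mul_le_mul_of_nonneg_left hintegral_le (by positivity)) M
  have hm₁_le : m₁ r ≤ M^2*c^2/(2*Q^2) * r := by
    rw [hm₁, setIntegral_congr_fun measurableSet_Ioi hζ₁_eq]
    exact sub_mul_integral_Ioi_div_max_sq_le hc hM hQ hr
  have hslope : M^2*c^2/(2*Q^2) < c^2/(2*G) := by
    rw [div_lt_div_iff₀ (by positivity) (by positivity)]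
    nlinarith [mul_lt_mul_of_pos_left hnoBH (by positivity : 0 < 2 * c^4)]
  refine ⟨hm_le, ?_⟩
  rw [div_lt_iff₀ hr]
  calc m r ≤ M^2*c^2/(2*Q^2) * r := hm_le.trans hm₁_le
    _ < c^2/(2*G) * r := by gcongr

/-- If `ζ : ℝ₊ → ℝ₊` dominates `ζ₁(μ) = min{μ, √(μ₁μ)}` pointwise
(`μ₁ = M⁴c⁸/(2Q⁶)`) and `GM² < Q²`, then whenever the integral defining
`m(r) = M - (1/c²)∫_r^∞ ζ(Q²/(2s⁴)) s² ds` converges one has `m(r) ≤ m₁(r)`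
and consequently `m(r)/r < c²/(2G)`. -/
theorem dominating_zeta_no_horizon (G c M Q μ₁ : ℝ) (hG : 0 < G) (hc : 0 < c)
    (hM : 0 < M) (hQ : 0 < Q) (hnoBH : G*M^2 < Q^2)
    (hμ₁ : μ₁ = M^4*c^8/(2*Q^6))
    (ζ ζ₁ : ℝ → ℝ) (m m₁ : ℝ → ℝ)
    (hζnn : ∀ μ, 0 ≤ μ → 0 ≤ ζ μ)
    (hζ₁ : ∀ μ, ζ₁ μ = min μ (Real.sqrt (μ₁*μ)))
    (hdom : ∀ μ, 0 < μ → ζ₁ μ < ζ μ)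
    (hm : ∀ r, m r = M - (1/c^2) * ∫ s in Set.Ioi r, ζ (Q^2/(2*s^4)) * s^2)
    (hm₁ : ∀ r, m₁ r = M - (1/c^2) * ∫ s in Set.Ioi r, ζ₁ (Q^2/(2*s^4)) * s^2) :
    ∀ r, 0 < r →
      IntegrableOn (fun s => ζ (Q^2/(2*s^4)) * s^2) (Set.Ioi r) →
      m r ≤ m₁ r ∧ m r / r < c^2/(2*G) :=
  dominating_zeta_no_horizon_general G c M Q μ₁ hG hc hM hQ hnoBH hμ₁ ζ ζ₁ m m₁ hζ₁ hdom hm hm₁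
end
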